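/- arXiv:1011.0067 — 7 statements merged into one kernel-verified Lean document; each statement's English description precedes it below -/
import Mathlib

section
/- For all 0 ≤ s < t < T, the inverse of Σ(s,t) satisfies Σ(s,t)⁻¹ = κ(s,t)⁻¹ + E(T,t)ᵀ κ(t,T)⁻¹ E(T,t). In particular, Σ(s,t) is symmetric and positive definite for all 0 ≤ s < t < T. -/
open MeasureTheory Matrix

attribute [local instance] Matrix.normedAddCommGroup Matrix.normedSpace

/-!
Integrating the Gramian integrand over `[s,t]` and `[t,T]` separately and using the cocycle
identity `E(T,u) = E(T,t) E(t,u)` gives `κ(s,T) = κ(t,T) + E(T,t) κ(s,t) E(T,t)ᵀ`. Since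
`Γ(s,T)⁻¹ = κ(s,T)⁻¹ E(T,s)`, we get `Σ(s,t) = E(t,T) κ(t,T) κ(s,T)⁻¹ E(T,t) κ(s,t)`, and
substituting the splitting of `κ(s,T)` shows by pure algebra that this is the inverse of
`κ(s,t)⁻¹ + E(T,t)ᵀ κ(t,T)⁻¹ E(T,t)`, a positive definite matrix plus a positive semidefinite one.
-/

namespace Matrix

variable {n R : Type*} [Fintype n] [DecidableEq n]

theorem mul_mul_inv_mul_mul_eq_inv_of_eq_add [CommRing R] {A B K M N : Matrix n n R}
    (hA : IsUnit A.det) (hB : IsUnit B.det) (hK : IsUnit K.det) (hNM : N * M = 1)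
    (hK_eq : K = B + M * A * Mᵀ) :
    N * B * K⁻¹ * M * A = (A⁻¹ + Mᵀ * B⁻¹ * M)⁻¹ := by
  refine (inv_eq_left_inv ?_).symm
  have hMAMt : M * A * Mᵀ = K - B := by rw [hK_eq]; abel
  calc N * B * K⁻¹ * M * A * (A⁻¹ + Mᵀ * B⁻¹ * M)
      = N * B * K⁻¹ * M * (A * A⁻¹) + N * B * K⁻¹ * (M * A * Mᵀ) * B⁻¹ * M := by noncomm_ring
    _ = N * B * K⁻¹ * M + N * (B * (K⁻¹ * K) * B⁻¹) * M - N * B * K⁻¹ * (B * B⁻¹) * M := by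
      rw [mul_nonsing_inv A hA, hMAMt]; noncomm_ring
    _ = N * M := by
      rw [nonsing_inv_mul K hK, mul_one, mul_nonsing_inv B hB]; noncomm_ring
    _ = 1 := hNM

theorem PosDef.inv_add_transpose_mul_inv_mul {A B : Matrix n n ℝ} (hA : A.PosDef)
    (hB : B.PosDef) (M : Matrix n n ℝ) : (A⁻¹ + Mᵀ * B⁻¹ * M).PosDef := by
  have h := hB.inv.posSemidef.conjTranspose_mul_mul_same M
  rw [conjTranspose_eq_transpose_of_trivial] at h
  exact hA.inv.add_posSemidef h

end Matrix

section ReachabilityGramian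

variable {n m : Type*} [Fintype n] [Fintype m]

noncomputable def reachabilityGramian (E : ℝ → ℝ → Matrix n n ℝ) (S : ℝ → Matrix n m ℝ)
    (s t : ℝ) : Matrix n n ℝ :=
  ∫ u in s..t, E t u * S u * (S u)ᵀ * (E t u)ᵀ

variable {E : ℝ → ℝ → Matrix n n ℝ} {S : ℝ → Matrix n m ℝ}

theorem continuousOn_reachabilityGramian_integrand
    (hEcont : ContinuousOn (fun x : ℝ × ℝ => E x.1 x.2) (Set.Ici 0 ×ˢ Set.Ici 0))
    (hS : ContinuousOn S (Set.Ici 0)) {t : ℝ} (ht : 0 ≤ t) :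
    ContinuousOn (fun u => E t u * S u * (S u)ᵀ * (E t u)ᵀ) (Set.Ici 0) := by
  have hE : ContinuousOn (E t) (Set.Ici 0) :=
    hEcont.comp (Continuous.prodMk_right t).continuousOn fun u hu => Set.mk_mem_prod ht hu
  rw [continuousOn_iff_continuous_domRestrict] at hE hS ⊢
  exact ((hE.matrix_mul hS).matrix_mul hS.matrix_transpose).matrix_mul hE.matrix_transpose

theorem intervalIntegral_mul_mul_transpose {a b : ℝ} {f : ℝ → Matrix n n ℝ}
    (hf : ContinuousOn f (Set.uIcc a b)) (A : Matrix n n ℝ) :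
    ∫ u in a..b, A * f u * Aᵀ = A * (∫ u in a..b, f u) * Aᵀ :=
  ((LinearMap.mulRight ℝ Aᵀ).comp (LinearMap.mulLeft ℝ A)).toContinuousLinearMap
    |>.intervalIntegral_comp_comm hf.intervalIntegrable

theorem reachabilityGramian_eq_add
    (hEcont : ContinuousOn (fun x : ℝ × ℝ => E x.1 x.2) (Set.Ici 0 ×ˢ Set.Ici 0))
    (hS : ContinuousOn S (Set.Ici 0))
    (hEmul : ∀ r s t : ℝ, 0 ≤ r → 0 ≤ s → 0 ≤ t → E t s * E s r = E t r)
    {s t T : ℝ} (hs : 0 ≤ s) (hst : s ≤ t) (htT : t ≤ T) :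
    reachabilityGramian E S s T =
      reachabilityGramian E S t T + E T t * reachabilityGramian E S s t * (E T t)ᵀ := by
  have ht := hs.trans hst
  have hcont := continuousOn_reachabilityGramian_integrand hEcont hS (ht.trans htT)
  have hsubset {a b : ℝ} (ha : 0 ≤ a) (hb : 0 ≤ b) : Set.uIcc a b ⊆ Set.Ici 0 :=
    fun _ hu => (le_min ha hb).trans hu.1
  have hfactor : Set.EqOn (fun u => E T u * S u * (S u)ᵀ * (E T u)ᵀ)
      (fun u => E T t * (E t u * S u * (S u)ᵀ * (E t u)ᵀ) * (E T t)ᵀ) (Set.uIcc s t) := by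
    intro u hu
    dsimp only
    rw [← hEmul u t T ((hsubset hs ht) hu) ht (ht.trans htT)]
    simp only [transpose_mul, Matrix.mul_assoc]
  unfold reachabilityGramian
  rw [← intervalIntegral.integral_add_adjacent_intervals
      (hcont.mono (hsubset hs ht)).intervalIntegrable
      (hcont.mono (hsubset ht (ht.trans htT))).intervalIntegrable,
    intervalIntegral.integral_congr hfactor, add_comm, intervalIntegral_mul_mul_transpose
      ((continuousOn_reachabilityGramian_integrand hEcont hS ht).mono (hsubset hs ht))]

end ReachabilityGramian

theorem sigma_inverse_identity_general
    {d p : ℕ}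
    (S : ℝ → Matrix (Fin d) (Fin p) ℝ)
    (hS : ContinuousOn S (Set.Ici 0))
    (E : ℝ → ℝ → Matrix (Fin d) (Fin d) ℝ)
    (hEcont : ContinuousOn (fun x : ℝ × ℝ => E x.1 x.2) (Set.Ici 0 ×ˢ Set.Ici 0))
    (hEid : ∀ t : ℝ, 0 ≤ t → E t t = 1)
    (hEmul : ∀ r s t : ℝ, 0 ≤ r → 0 ≤ s → 0 ≤ t → E t s * E s r = E t r)
    (κ Γ : ℝ → ℝ → Matrix (Fin d) (Fin d) ℝ)
    (hκ : ∀ s t : ℝ, 0 ≤ s → s ≤ t →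
      κ s t = ∫ u in s..t, E t u * S u * (S u)ᵀ * (E t u)ᵀ)
    (hΓ : ∀ s t : ℝ, 0 ≤ s → s ≤ t → Γ s t = E s t * κ s t)
    (T : ℝ)
    (hκpd : ∀ s t : ℝ, 0 ≤ s → s < t → (κ s t).IsSymm ∧ (κ s t).PosDef)
    (Sg : ℝ → ℝ → Matrix (Fin d) (Fin d) ℝ)
    (hSg : ∀ s t : ℝ, 0 ≤ s → s < t → t < T → Sg s t = Γ t T * (Γ s T)⁻¹ * Γ s t) :
    ∀ s t : ℝ, 0 ≤ s → s < t → t < T →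
      (Sg s t)⁻¹ = (κ s t)⁻¹ + (E T t)ᵀ * (κ t T)⁻¹ * E T t
        ∧ (Sg s t).IsSymm ∧ (Sg s t).PosDef := by
  intro s t hs hst htT
  have ht : 0 ≤ t := hs.trans hst.le
  have hT : 0 ≤ T := ht.trans htT.le
  have hsT : s < T := hst.trans htT
  have hK₁ := (hκpd s t hs hst).2
  have hK₂ := (hκpd t T ht htT).2
  have hK := (hκpd s T hs hsT).2
  have hsplit : κ s T = κ t T + E T t * κ s t * (E T t)ᵀ := by
    rw [hκ s T hs hsT.le, hκ t T ht htT.le, hκ s t hs hst.le]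
    exact reachabilityGramian_eq_add hEcont hS hEmul hs hst.le htT.le
  have hE_inv {a b : ℝ} (ha : 0 ≤ a) (hb : 0 ≤ b) : E a b * E b a = 1 := by
    rw [hEmul a b a ha hb ha, hEid a ha]
  have hSg_eq : Sg s t = E t T * κ t T * (κ s T)⁻¹ * E T t * κ s t := by
    rw [hSg s t hs hst htT, hΓ t T ht htT.le, hΓ s T hs hsT.le, hΓ s t hs hst.le,
      Matrix.mul_inv_rev, inv_eq_right_inv (hE_inv hs hT), ← hEmul t s T ht hs hT]
    noncomm_ring
  have hSg_inv : Sg s t = ((κ s t)⁻¹ + (E T t)ᵀ * (κ t T)⁻¹ * E T t)⁻¹ := by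
    rw [hSg_eq]
    exact mul_mul_inv_mul_mul_eq_inv_of_eq_add hK₁.det_pos.ne'.isUnit hK₂.det_pos.ne'.isUnit
      hK.det_pos.ne'.isUnit (hE_inv ht hT) hsplit
  have hpd := hK₁.inv_add_transpose_mul_inv_mul hK₂ (E T t)
  have hSg_pd : (Sg s t).PosDef := hSg_inv ▸ hpd.inv
  refine ⟨?_, isHermitian_iff_isSymm.mp hSg_pd.isHermitian, hSg_pd⟩
  rw [hSg_inv, nonsing_inv_nonsing_inv _ hpd.det_pos.ne'.isUnit]

/-- Lemma 2 (gen_sigma_identity): for `0 ≤ s < t < T`,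
`Σ(s,t)⁻¹ = κ(s,t)⁻¹ + E(T,t)ᵀ κ(t,T)⁻¹ E(T,t)`; in particular `Σ(s,t)` is
symmetric and positive definite. -/
theorem sigma_inverse_identity
    {d p : ℕ} (hd : 1 ≤ d)
    (Q : ℝ → Matrix (Fin d) (Fin d) ℝ) (S : ℝ → Matrix (Fin d) (Fin p) ℝ)
    (hQ : ContinuousOn Q (Set.Ici 0)) (hS : ContinuousOn S (Set.Ici 0))
    (E : ℝ → ℝ → Matrix (Fin d) (Fin d) ℝ)
    (hEcont : ContinuousOn (fun x : ℝ × ℝ => E x.1 x.2) (Set.Ici 0 ×ˢ Set.Ici 0))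
    (hEid : ∀ t : ℝ, 0 ≤ t → E t t = 1)
    (hEmul : ∀ r s t : ℝ, 0 ≤ r → 0 ≤ s → 0 ≤ t → E t s * E s r = E t r)
    (hEderiv : ∀ s : ℝ, 0 ≤ s → ∀ t : ℝ, 0 ≤ t →
      HasDerivAt (fun τ => E τ s) (Q t * E t s) t)
    (κ Γ : ℝ → ℝ → Matrix (Fin d) (Fin d) ℝ)
    (hκ : ∀ s t : ℝ, 0 ≤ s → s ≤ t →
      κ s t = ∫ u in s..t, E t u * S u * (S u)ᵀ * (E t u)ᵀ)
    (hΓ : ∀ s t : ℝ, 0 ≤ s → s ≤ t → Γ s t = E s t * κ s t)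
    (T : ℝ) (hT : 0 < T)
    (hκpd : ∀ s t : ℝ, 0 ≤ s → s < t → (κ s t).IsSymm ∧ (κ s t).PosDef)
    (Sg : ℝ → ℝ → Matrix (Fin d) (Fin d) ℝ)
    (hSg : ∀ s t : ℝ, 0 ≤ s → s < t → t < T → Sg s t = Γ t T * (Γ s T)⁻¹ * Γ s t) :
    ∀ s t : ℝ, 0 ≤ s → s < t → t < T →
      (Sg s t)⁻¹ = (κ s t)⁻¹ + (E T t)ᵀ * (κ t T)⁻¹ * E T t
        ∧ (Sg s t).IsSymm ∧ (Sg s t).PosDef :=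
  sigma_inverse_identity_general S hS E hEcont hEid hEmul κ Γ hκ hΓ T hκpd Sg hSg
end

section
/- For all 0 ≤ s < t < T one has κ(t,T)⁻¹ − κ(s,T)⁻¹ = Γ(s,T)⁻¹ Γ(s,t) (Γ(t,T)ᵀ)⁻¹. -/
/-!
Splitting the integral defining `κ(s,T)` at `t` and using `E(T,u) = E(T,t) E(t,u)` on `[s,t]` gives
`κ(s,T) = E(T,t) κ(s,t) E(T,t)ᵀ + κ(t,T)`. Hence
`κ(t,T)⁻¹ - κ(s,T)⁻¹ = κ(s,T)⁻¹ (κ(s,T) - κ(t,T)) κ(t,T)⁻¹ = κ(s,T)⁻¹ E(T,t) κ(s,t) E(T,t)ᵀ κ(t,T)⁻¹`,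
and this is the right-hand side once `Γ(s,T)⁻¹ = κ(s,T)⁻¹ E(T,s)` and, by symmetry of `κ(t,T)`,
`(Γ(t,T)ᵀ)⁻¹ = E(T,t)ᵀ κ(t,T)⁻¹`.
-/

open MeasureTheory Matrix Set

attribute [local instance] Matrix.normedAddCommGroup Matrix.normedSpace

-- The norm topology of `Matrix.normedAddCommGroup` is the product topology only up to a
-- defeq that instance search does not unfold.
local instance {n m : Type*} [Fintype n] [Fintype m] : ENormedAddMonoid (Matrix n m ℝ) :=
  NormedAddGroup.toENormedAddMonoid

theorem intervalIntegral_matrix_mul_mul {n : Type*} [Fintype n] [DecidableEq n]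
    (A B : Matrix n n ℝ) {f : ℝ → Matrix n n ℝ} {a b : ℝ}
    (hf : IntervalIntegrable f volume a b) :
    ∫ u in a..b, A * f u * B = A * (∫ u in a..b, f u) * B :=
  (LinearMap.mulLeftRight ℝ (A, B)).toContinuousLinearMap.intervalIntegral_comp_comm hf

section Gramian

variable {n m : Type*} [Fintype n] [Fintype m] {E : ℝ → ℝ → Matrix n n ℝ} {S : ℝ → Matrix n m ℝ}

theorem continuousOn_gramian_integrand
    (hE : ContinuousOn (fun x : ℝ × ℝ => E x.1 x.2) (Ici 0 ×ˢ Ici 0))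
    (hS : ContinuousOn S (Ici 0)) {v : ℝ} (hv : 0 ≤ v) :
    ContinuousOn (fun u => E v u * S u * (S u)ᵀ * (E v u)ᵀ) (Ici 0) := by
  have hEv : ContinuousOn (fun u => E v u) (Ici 0) :=
    hE.comp (Continuous.prodMk_right v).continuousOn fun _ hu => ⟨hv, hu⟩
  fun_prop

theorem intervalIntegrable_gramian_integrand
    (hE : ContinuousOn (fun x : ℝ × ℝ => E x.1 x.2) (Ici 0 ×ˢ Ici 0))
    (hS : ContinuousOn S (Ici 0)) {a b v : ℝ} (ha : 0 ≤ a) (hab : a ≤ b) (hv : 0 ≤ v) :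
    IntervalIntegrable (fun u => E v u * S u * (S u)ᵀ * (E v u)ᵀ) volume a b :=
  ((continuousOn_gramian_integrand hE hS hv).mono fun _ hx =>
    ha.trans (uIcc_of_le hab ▸ hx).1).intervalIntegrable

theorem gramian_integral_split [DecidableEq n]
    (hE : ContinuousOn (fun x : ℝ × ℝ => E x.1 x.2) (Ici 0 ×ˢ Ici 0))
    (hS : ContinuousOn S (Ici 0))
    (hEmul : ∀ r s t : ℝ, 0 ≤ r → 0 ≤ s → 0 ≤ t → E t s * E s r = E t r)
    {s t T : ℝ} (hs : 0 ≤ s) (hst : s ≤ t) (htT : t ≤ T) :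
    ∫ u in s..T, E T u * S u * (S u)ᵀ * (E T u)ᵀ =
      E T t * (∫ u in s..t, E t u * S u * (S u)ᵀ * (E t u)ᵀ) * (E T t)ᵀ +
        ∫ u in t..T, E T u * S u * (S u)ᵀ * (E T u)ᵀ := by
  have ht := hs.trans hst
  have hT := ht.trans htT
  rw [← intervalIntegral.integral_add_adjacent_intervals
      (intervalIntegrable_gramian_integrand hE hS hs hst hT)
      (intervalIntegrable_gramian_integrand hE hS ht htT hT),
    ← intervalIntegral_matrix_mul_mul _ _ (intervalIntegrable_gramian_integrand hE hS hs hst ht)]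
  congr 1
  refine intervalIntegral.integral_congr fun u hu => ?_
  rw [← hEmul u t T (hs.trans (uIcc_of_le hst ▸ hu).1) ht hT]
  simp only [transpose_mul, Matrix.mul_assoc]

end Gramian

theorem kappa_inverse_difference_general
    {d p : ℕ}
    (S : ℝ → Matrix (Fin d) (Fin p) ℝ)
    (hS : ContinuousOn S (Set.Ici 0))
    (E : ℝ → ℝ → Matrix (Fin d) (Fin d) ℝ)
    (hEcont : ContinuousOn (fun x : ℝ × ℝ => E x.1 x.2) (Set.Ici 0 ×ˢ Set.Ici 0))
    (hEid : ∀ t : ℝ, 0 ≤ t → E t t = 1)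
    (hEmul : ∀ r s t : ℝ, 0 ≤ r → 0 ≤ s → 0 ≤ t → E t s * E s r = E t r)
    (κ Γ : ℝ → ℝ → Matrix (Fin d) (Fin d) ℝ)
    (hκ : ∀ s t : ℝ, 0 ≤ s → s ≤ t →
      κ s t = ∫ u in s..t, E t u * S u * (S u)ᵀ * (E t u)ᵀ)
    (hΓ : ∀ s t : ℝ, 0 ≤ s → s ≤ t → Γ s t = E s t * κ s t)
    (T : ℝ)
    (hκpd : ∀ s t : ℝ, 0 ≤ s → s < t → (κ s t).IsSymm ∧ (κ s t).PosDef) :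
    ∀ s t : ℝ, 0 ≤ s → s < t → t < T →
      (κ t T)⁻¹ - (κ s T)⁻¹ = (Γ s T)⁻¹ * Γ s t * ((Γ t T)ᵀ)⁻¹ := by
  intro s t hs hst htT
  have ht := hs.trans hst.le
  have hT := ht.trans htT.le
  have hsT := hst.trans htT
  have hκ_sub : κ s T - κ t T = E T t * κ s t * (E T t)ᵀ := by
    rw [hκ s T hs hsT.le, hκ s t hs hst.le, hκ t T ht htT.le,
      gramian_integral_split hEcont hS hEmul hs hst.le htT.le, add_sub_cancel_right]
  have hE_inv : ∀ a b, 0 ≤ a → 0 ≤ b → (E a b)⁻¹ = E b a := fun a b ha hb =>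
    inv_eq_right_inv (by rw [hEmul a b a ha hb ha, hEid a ha])
  have hκ_unit : ∀ a, 0 ≤ a → a < T → IsUnit (κ a T) := fun a ha haT =>
    (isUnit_iff_isUnit_det _).2 (hκpd a T ha haT).2.det_pos.ne'.isUnit
  rw [hΓ s T hs hsT.le, hΓ s t hs hst.le, hΓ t T ht htT.le, transpose_mul, (hκpd t T ht htT).1,
    Matrix.mul_inv_rev, Matrix.mul_inv_rev, hE_inv s T hs hT, ← transpose_nonsing_inv,
    hE_inv t T ht hT]
  calc (κ t T)⁻¹ - (κ s T)⁻¹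
      = (κ s T)⁻¹ * (κ s T - κ t T) * (κ t T)⁻¹ := by
        rw [← neg_sub, Matrix.inv_sub_inv (by simp [hκ_unit s hs hsT, hκ_unit t ht htT]),
          ← neg_sub (κ s T), mul_neg, neg_mul, neg_neg]
    _ = (κ s T)⁻¹ * E T s * (E s t * κ s t) * ((E T t)ᵀ * (κ t T)⁻¹) := by
        rw [hκ_sub, ← hEmul t s T ht hs hT]
        simp only [Matrix.mul_assoc]

/-- Lemma 3(a): for `0 ≤ s < t < T`,
`κ(t,T)⁻¹ − κ(s,T)⁻¹ = Γ(s,T)⁻¹ Γ(s,t) (Γ(t,T)ᵀ)⁻¹`. -/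
theorem kappa_inverse_difference
    {d p : ℕ} (hd : 1 ≤ d)
    (Q : ℝ → Matrix (Fin d) (Fin d) ℝ) (S : ℝ → Matrix (Fin d) (Fin p) ℝ)
    (hQ : ContinuousOn Q (Set.Ici 0)) (hS : ContinuousOn S (Set.Ici 0))
    (E : ℝ → ℝ → Matrix (Fin d) (Fin d) ℝ)
    (hEcont : ContinuousOn (fun x : ℝ × ℝ => E x.1 x.2) (Set.Ici 0 ×ˢ Set.Ici 0))
    (hEid : ∀ t : ℝ, 0 ≤ t → E t t = 1)
    (hEmul : ∀ r s t : ℝ, 0 ≤ r → 0 ≤ s → 0 ≤ t → E t s * E s r = E t r)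
    (hEderiv : ∀ s : ℝ, 0 ≤ s → ∀ t : ℝ, 0 ≤ t →
      HasDerivAt (fun τ => E τ s) (Q t * E t s) t)
    (κ Γ : ℝ → ℝ → Matrix (Fin d) (Fin d) ℝ)
    (hκ : ∀ s t : ℝ, 0 ≤ s → s ≤ t →
      κ s t = ∫ u in s..t, E t u * S u * (S u)ᵀ * (E t u)ᵀ)
    (hΓ : ∀ s t : ℝ, 0 ≤ s → s ≤ t → Γ s t = E s t * κ s t)
    (T : ℝ) (hT : 0 < T)
    (hκpd : ∀ s t : ℝ, 0 ≤ s → s < t → (κ s t).IsSymm ∧ (κ s t).PosDef) :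
    ∀ s t : ℝ, 0 ≤ s → s < t → t < T →
      (κ t T)⁻¹ - (κ s T)⁻¹ = (Γ s T)⁻¹ * Γ s t * ((Γ t T)ᵀ)⁻¹ :=
  kappa_inverse_difference_general S hS E hEcont hEid hEmul κ Γ hκ hΓ T hκpd
end

section
/- For all 0 ≤ s < t < T one has Σ(s,t) = Γ(t,T) · (∫_s^t Γ(u,T)⁻¹ S(u)S(u)ᵀ (Γ(u,T)ᵀ)⁻¹ du) · Γ(t,T)ᵀ. -/
/-!
With `f u = E(T,u) S(u) S(u)ᵀ E(T,u)ᵀ` one has `∂ᵤ κ(u,T) = -f(u)`, and since `κ(u,T)` is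
symmetric the integrand `Γ(u,T)⁻¹ S Sᵀ Γ(u,T)⁻ᵀ` equals `κ(u,T)⁻¹ f(u) κ(u,T)⁻¹ = ∂ᵤ (κ(u,T)⁻¹)`;
hence the integral is `κ(t,T)⁻¹ - κ(s,T)⁻¹`. On the other side, splitting the integral defining
`κ(s,T)` at `t` gives `κ(s,T) = E(T,t) κ(s,t) E(T,t)ᵀ + κ(t,T)`, and with it both sides of the
identity reduce to `E(t,T) (κ(t,T) - κ(t,T) κ(s,T)⁻¹ κ(t,T)) E(t,T)ᵀ`.
-/

open MeasureTheory Matrix Topology Filter Set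

attribute [local instance] Matrix.normedAddCommGroup Matrix.normedSpace

-- The sup norm's topology is the product topology of `Matrix` only up to unfolding, so instance
-- search does not find these two on its own.
noncomputable instance Matrix.instENormedAddMonoidReal {m n : Type*} [Fintype m] [Fintype n] :
    ENormedAddMonoid (Matrix m n ℝ) := by
  exact NormedAddGroup.toENormedAddMonoid

instance Matrix.instPseudoMetrizableSpaceReal {m n : Type*} [Fintype m] [Fintype n] :
    TopologicalSpace.PseudoMetrizableSpace (Matrix m n ℝ) := by
  exact (inferInstance : @TopologicalSpace.PseudoMetrizableSpace (Matrix m n ℝ)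
    PseudoMetricSpace.toUniformSpace.toTopologicalSpace)

namespace Matrix

variable {n m R : Type*} [Fintype n] [DecidableEq n] [Fintype m] [CommRing R]

theorem mul_inv_mul_mul_transpose_transpose_inv (A K : Matrix n n R) (B : Matrix n m R) :
    (A * K)⁻¹ * B * Bᵀ * ((A * K)ᵀ)⁻¹ = K⁻¹ * (A⁻¹ * B * Bᵀ * A⁻¹ᵀ) * K⁻¹ᵀ := by
  simp only [mul_inv_rev, transpose_mul, transpose_nonsing_inv, Matrix.mul_assoc]

theorem mul_inv_mul_eq_sub_inv_of_eq_conj_add {A B K L k : Matrix n n R} (hAB : A * B = 1)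
    (hK : IsUnit K.det) (hL : IsUnit L.det) (hLsymm : Lᵀ = L) (hsplit : K = B * k * Bᵀ + L) :
    A * L * (K⁻¹ * B * k) = A * L * (L⁻¹ - K⁻¹) * (A * L)ᵀ := by
  have hBk : B * k = (K - L) * Aᵀ := by
    rw [hsplit, add_sub_cancel_right, Matrix.mul_assoc _ Bᵀ, ← transpose_mul, hAB,
      transpose_one, Matrix.mul_one]
  calc A * L * (K⁻¹ * B * k) = A * (L - L * K⁻¹ * L) * Aᵀ := by
        rw [Matrix.mul_assoc K⁻¹, hBk, ← Matrix.mul_assoc K⁻¹, Matrix.mul_sub K⁻¹,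
          nonsing_inv_mul K hK]
        noncomm_ring
    _ = A * L * (L⁻¹ - K⁻¹) * (A * L)ᵀ := by
        rw [transpose_mul, hLsymm, Matrix.mul_assoc A L, Matrix.mul_sub L, mul_nonsing_inv L hL]
        noncomm_ring

end Matrix

section MatrixCalculus

variable {n : Type*} [Fintype n] [DecidableEq n]

theorem Matrix.continuousAt_inv_of_isUnit_det {𝕜 : Type*} [NormedField 𝕜] {A : Matrix n n 𝕜}
    (h : IsUnit A.det) : ContinuousAt Inv.inv A :=
  continuousAt_matrix_inv A (by
    simpa only [Ring.inverse_eq_inv'] using continuousAt_inv₀ h.ne_zero)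

theorem ContinuousOn.matrix_inv {𝕜 X : Type*} [NormedField 𝕜] [TopologicalSpace X]
    {A : X → Matrix n n 𝕜} {s : Set X} (hA : ContinuousOn A s) (h : ∀ x ∈ s, IsUnit (A x).det) :
    ContinuousOn (fun x => (A x)⁻¹) s := fun x hx =>
  (Matrix.continuousAt_inv_of_isUnit_det (h x hx)).comp_continuousWithinAt (hA x hx)

theorem HasDerivAt.matrix_inv {𝕜 : Type*} [NontriviallyNormedField 𝕜] {A : 𝕜 → Matrix n n 𝕜}
    {A' : Matrix n n 𝕜} {x : 𝕜}
    (hA : HasDerivAt A A' x) (h : IsUnit (A x).det) :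
    HasDerivAt (fun u => (A u)⁻¹) (-((A x)⁻¹ * A' * (A x)⁻¹)) x := by
  have hunit : ∀ᶠ u in 𝓝 x, IsUnit (A u).det :=
    ((continuous_id.matrix_det.continuousAt.comp hA.continuousAt).eventually_ne h.ne_zero).mono
      fun _ hu => hu.isUnit
  have hslope : (fun u => -((A u)⁻¹ * slope A x u * (A x)⁻¹)) =ᶠ[𝓝[≠] x]
      slope (fun u => (A u)⁻¹) x := by
    filter_upwards [eventually_nhdsWithin_of_eventually_nhds hunit] with u hu
    have hdiff : (A u)⁻¹ - (A x)⁻¹ = -((A u)⁻¹ * (A u - A x) * (A x)⁻¹) := by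
      rw [Matrix.mul_sub, Matrix.sub_mul, nonsing_inv_mul _ hu, Matrix.mul_assoc,
        mul_nonsing_inv _ h, Matrix.one_mul, Matrix.mul_one, neg_sub]
    rw [slope_def_module, slope_def_module, hdiff, Matrix.mul_smul, Matrix.smul_mul, smul_neg]
  have hinv : Tendsto (fun u => (A u)⁻¹) (𝓝[≠] x) (𝓝 (A x)⁻¹) :=
    ((Matrix.continuousAt_inv_of_isUnit_det h).comp hA.continuousAt).continuousWithinAt.tendsto
  exact hasDerivAt_iff_tendsto_slope.mpr
    (((hinv.mul (hasDerivAt_iff_tendsto_slope.mp hA)).mul tendsto_const_nhds).neg.congr' hslope)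

theorem intervalIntegral.integral_matrix_mul_mul (A B : Matrix n n ℝ) {f : ℝ → Matrix n n ℝ}
    {a b : ℝ} (hf : IntervalIntegrable f volume a b) :
    ∫ x in a..b, A * f x * B = A * (∫ x in a..b, f x) * B :=
  (LinearMap.mulLeftRight ℝ (A, B)).toContinuousLinearMap.intervalIntegral_comp_comm hf

theorem intervalIntegral.integral_inv_mul_deriv_mul_inv {K K' : ℝ → Matrix n n ℝ} {a b : ℝ}
    (hab : a ≤ b) (hK : ContinuousOn K (Icc a b)) (hK' : ContinuousOn K' (Icc a b))
    (hderiv : ∀ x ∈ Ioo a b, HasDerivAt K (K' x) x) (hunit : ∀ x ∈ Icc a b, IsUnit (K x).det) :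
    ∫ x in a..b, (K x)⁻¹ * K' x * (K x)⁻¹ = (K a)⁻¹ - (K b)⁻¹ := by
  have hKinv := hK.matrix_inv hunit
  have hint : IntervalIntegrable (fun x => -((K x)⁻¹ * K' x * (K x)⁻¹)) volume a b := by
    refine ContinuousOn.intervalIntegrable ?_
    rw [uIcc_of_le hab]
    fun_prop
  have := integral_eq_sub_of_hasDeriv_right_of_le hab hKinv
    (fun x hx => ((hderiv x hx).matrix_inv (hunit x (Ioo_subset_Icc_self hx))).hasDerivWithinAt)
    hint
  rwa [intervalIntegral.integral_neg, neg_eq_iff_eq_neg, neg_sub] at this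

theorem intervalIntegral.integral_inv_primitive_mul_mul_inv {f : ℝ → Matrix n n ℝ} {a b T : ℝ}
    (hab : a ≤ b) (hbT : b ≤ T) (hf : ContinuousOn f (Icc a T))
    (hunit : ∀ x ∈ Icc a b, IsUnit (∫ y in x..T, f y).det) :
    ∫ x in a..b, (∫ y in x..T, f y)⁻¹ * f x * (∫ y in x..T, f y)⁻¹
      = (∫ y in b..T, f y)⁻¹ - (∫ y in a..T, f y)⁻¹ := by
  have hsub : Icc a b ⊆ Icc a T := Icc_subset_Icc_right hbT
  have hprim : ContinuousOn (fun x => ∫ y in x..T, f y) (Icc a b) := by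
    refine (continuousOn_primitive_interval_left (a := a) ?_).mono ?_
    · rw [uIcc_of_le (hab.trans hbT)]
      exact hf.integrableOn_Icc
    · rwa [uIcc_of_le (hab.trans hbT)]
  have hderiv : ∀ x ∈ Ioo a b, HasDerivAt (fun x => ∫ y in x..T, f y) (-f x) x := by
    intro x hx
    have hxT : x ∈ Ioo a T := ⟨hx.1, hx.2.trans_le hbT⟩
    refine integral_hasDerivAt_left ?_
      (hf.mono Ioo_subset_Icc_self |>.stronglyMeasurableAtFilter isOpen_Ioo x hxT)
      (hf.continuousAt (Icc_mem_nhds hxT.1 hxT.2))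
    refine (hf.mono ?_).intervalIntegrable
    rw [uIcc_of_le hxT.2.le]
    exact Icc_subset_Icc_left hx.1.le
  have := integral_inv_mul_deriv_mul_inv hab hprim (hf.mono hsub).neg hderiv hunit
  simpa only [Pi.neg_apply, Matrix.mul_neg, Matrix.neg_mul, intervalIntegral.integral_neg,
    neg_eq_iff_eq_neg, neg_sub] using this

end MatrixCalculus

section KalmanGram

variable {n m : Type*} [Fintype n] [Fintype m] {E : ℝ → ℝ → Matrix n n ℝ} {S : ℝ → Matrix n m ℝ}

variable (E S) in
noncomputable def kalmanGram (s t : ℝ) : Matrix n n ℝ :=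
  ∫ u in s..t, E t u * S u * (S u)ᵀ * (E t u)ᵀ

theorem continuousOn_kalmanGram_integrand
    (hE : ContinuousOn (fun x : ℝ × ℝ => E x.1 x.2) (Ici 0 ×ˢ Ici 0))
    (hS : ContinuousOn S (Ici 0)) {c : ℝ} (hc : 0 ≤ c) :
    ContinuousOn (fun u => E c u * S u * (S u)ᵀ * (E c u)ᵀ) (Ici 0) := by
  have hEc : ContinuousOn (E c) (Ici 0) :=
    hE.comp (Continuous.prodMk_right c).continuousOn fun _ hu => ⟨hc, hu⟩
  fun_prop

theorem kalmanGram_eq_conj_add [DecidableEq n]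
    (hE : ContinuousOn (fun x : ℝ × ℝ => E x.1 x.2) (Ici 0 ×ˢ Ici 0))
    (hS : ContinuousOn S (Ici 0))
    (hEmul : ∀ r s t : ℝ, 0 ≤ r → 0 ≤ s → 0 ≤ t → E t s * E s r = E t r)
    {s t T : ℝ} (hs : 0 ≤ s) (ht : 0 ≤ t) (hT : 0 ≤ T) :
    kalmanGram E S s T = E T t * kalmanGram E S s t * (E T t)ᵀ + kalmanGram E S t T := by
  have hint : ∀ {c a b : ℝ}, 0 ≤ c → 0 ≤ a → 0 ≤ b →
      IntervalIntegrable (fun u => E c u * S u * (S u)ᵀ * (E c u)ᵀ) volume a b :=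
    fun hc ha hb => ((continuousOn_kalmanGram_integrand hE hS hc).mono
      fun _ hu => (le_min ha hb).trans hu.1).intervalIntegrable
  have hconj : ∫ u in s..t, E T u * S u * (S u)ᵀ * (E T u)ᵀ
      = E T t * kalmanGram E S s t * (E T t)ᵀ := by
    rw [kalmanGram, ← intervalIntegral.integral_matrix_mul_mul _ _ (hint ht hs ht)]
    refine intervalIntegral.integral_congr fun u hu => ?_
    have hu : 0 ≤ u := (le_min hs ht).trans hu.1
    simp only [← hEmul u t T hu ht hT, transpose_mul, Matrix.mul_assoc]
  rw [← hconj]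
  exact (intervalIntegral.integral_add_adjacent_intervals (hint hT hs ht) (hint hT ht hT)).symm

theorem integral_inv_kalmanGram_mul_mul_inv [DecidableEq n]
    (hE : ContinuousOn (fun x : ℝ × ℝ => E x.1 x.2) (Ici 0 ×ˢ Ici 0))
    (hS : ContinuousOn S (Ici 0)) {s t T : ℝ} (hs : 0 ≤ s) (hst : s ≤ t) (htT : t ≤ T)
    (hunit : ∀ u ∈ Icc s t, IsUnit (kalmanGram E S u T).det) :
    ∫ u in s..t, (kalmanGram E S u T)⁻¹ * (E T u * S u * (S u)ᵀ * (E T u)ᵀ) *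
        (kalmanGram E S u T)⁻¹
      = (kalmanGram E S t T)⁻¹ - (kalmanGram E S s T)⁻¹ :=
  intervalIntegral.integral_inv_primitive_mul_mul_inv hst htT
    ((continuousOn_kalmanGram_integrand hE hS (hs.trans (hst.trans htT))).mono
      fun _ hu => hs.trans hu.1) hunit

end KalmanGram

theorem sigma_integral_representation_general
    {d p : ℕ}
    (S : ℝ → Matrix (Fin d) (Fin p) ℝ)
    (hS : ContinuousOn S (Set.Ici 0))
    (E : ℝ → ℝ → Matrix (Fin d) (Fin d) ℝ)
    (hEcont : ContinuousOn (fun x : ℝ × ℝ => E x.1 x.2) (Set.Ici 0 ×ˢ Set.Ici 0))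
    (hEid : ∀ t : ℝ, 0 ≤ t → E t t = 1)
    (hEmul : ∀ r s t : ℝ, 0 ≤ r → 0 ≤ s → 0 ≤ t → E t s * E s r = E t r)
    (κ Γ : ℝ → ℝ → Matrix (Fin d) (Fin d) ℝ)
    (hκ : ∀ s t : ℝ, 0 ≤ s → s ≤ t →
      κ s t = ∫ u in s..t, E t u * S u * (S u)ᵀ * (E t u)ᵀ)
    (hΓ : ∀ s t : ℝ, 0 ≤ s → s ≤ t → Γ s t = E s t * κ s t)
    (T : ℝ)
    (hκpd : ∀ s t : ℝ, 0 ≤ s → s < t → (κ s t).IsSymm ∧ (κ s t).PosDef)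
    (Sg : ℝ → ℝ → Matrix (Fin d) (Fin d) ℝ)
    (hSg : ∀ s t : ℝ, 0 ≤ s → s < t → t < T → Sg s t = Γ t T * (Γ s T)⁻¹ * Γ s t) :
    ∀ s t : ℝ, 0 ≤ s → s < t → t < T →
      Sg s t
        = Γ t T * (∫ u in s..t, (Γ u T)⁻¹ * S u * (S u)ᵀ * ((Γ u T)ᵀ)⁻¹) * (Γ t T)ᵀ := by
  intro s t hs hst htT
  have ht : 0 ≤ t := hs.trans hst.le
  have hT : 0 ≤ T := ht.trans htT.le
  have hEinv : ∀ a b, 0 ≤ a → 0 ≤ b → (E a b)⁻¹ = E b a := fun a b ha hb =>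
    inv_eq_right_inv (by rw [hEmul a b a ha hb ha, hEid a ha])
  have hκT : ∀ u ∈ Icc s t, kalmanGram E S u T = κ u T ∧ (κ u T)ᵀ = κ u T ∧
      IsUnit (κ u T).det := fun u hu =>
    have hu : 0 ≤ u ∧ u < T := ⟨hs.trans hu.1, hu.2.trans_lt htT⟩
    ⟨(hκ u T hu.1 hu.2.le).symm, (hκpd u T hu.1 hu.2).1, (hκpd u T hu.1 hu.2).2.det_pos.ne'.isUnit⟩
  obtain ⟨hκs, -, hunits⟩ := hκT s (left_mem_Icc.2 hst.le)
  obtain ⟨hκt, hsymmt, hunitt⟩ := hκT t (right_mem_Icc.2 hst.le)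
  have hintegral : ∫ u in s..t, (Γ u T)⁻¹ * S u * (S u)ᵀ * ((Γ u T)ᵀ)⁻¹
      = (κ t T)⁻¹ - (κ s T)⁻¹ := by
    rw [← hκt, ← hκs, ← integral_inv_kalmanGram_mul_mul_inv hEcont hS hs hst.le htT.le
        fun u hu => (hκT u hu).1 ▸ (hκT u hu).2.2]
    refine intervalIntegral.integral_congr fun u hu => ?_
    rw [uIcc_of_le hst.le] at hu
    rw [hΓ u T (hs.trans hu.1) (hu.2.trans htT.le), mul_inv_mul_mul_transpose_transpose_inv,
      hEinv u T (hs.trans hu.1) hT, transpose_nonsing_inv, (hκT u hu).2.1, (hκT u hu).1]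
  have hΓs : (Γ s T)⁻¹ * Γ s t = (κ s T)⁻¹ * E T t * κ s t := by
    rw [hΓ s T hs (hst.trans htT).le, hΓ s t hs hst.le, Matrix.mul_inv_rev, hEinv s T hs hT,
      Matrix.mul_assoc, ← Matrix.mul_assoc (E T s), hEmul t s T ht hs hT, ← Matrix.mul_assoc]
  have hsplit : κ s T = E T t * κ s t * (E T t)ᵀ + κ t T := by
    rw [← hκs, ← hκt, hκ s t hs hst.le]
    exact kalmanGram_eq_conj_add hEcont hS hEmul hs ht hT
  rw [hSg s t hs hst htT, Matrix.mul_assoc (Γ t T), hΓs, hintegral, hΓ t T ht htT.le]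
  exact mul_inv_mul_eq_sub_inv_of_eq_conj_add (by rw [hEmul t T t ht hT ht, hEid t ht])
    hunits hunitt hsymmt hsplit

/-- Lemma 3(b): for `0 ≤ s < t < T`,
`Σ(s,t) = Γ(t,T) (∫_s^t Γ(u,T)⁻¹ S(u)S(u)ᵀ (Γ(u,T)ᵀ)⁻¹ du) Γ(t,T)ᵀ`. -/
theorem sigma_integral_representation
    {d p : ℕ} (hd : 1 ≤ d)
    (Q : ℝ → Matrix (Fin d) (Fin d) ℝ) (S : ℝ → Matrix (Fin d) (Fin p) ℝ)
    (hQ : ContinuousOn Q (Set.Ici 0)) (hS : ContinuousOn S (Set.Ici 0))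
    (E : ℝ → ℝ → Matrix (Fin d) (Fin d) ℝ)
    (hEcont : ContinuousOn (fun x : ℝ × ℝ => E x.1 x.2) (Set.Ici 0 ×ˢ Set.Ici 0))
    (hEid : ∀ t : ℝ, 0 ≤ t → E t t = 1)
    (hEmul : ∀ r s t : ℝ, 0 ≤ r → 0 ≤ s → 0 ≤ t → E t s * E s r = E t r)
    (hEderiv : ∀ s : ℝ, 0 ≤ s → ∀ t : ℝ, 0 ≤ t →
      HasDerivAt (fun τ => E τ s) (Q t * E t s) t)
    (κ Γ : ℝ → ℝ → Matrix (Fin d) (Fin d) ℝ)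
    (hκ : ∀ s t : ℝ, 0 ≤ s → s ≤ t →
      κ s t = ∫ u in s..t, E t u * S u * (S u)ᵀ * (E t u)ᵀ)
    (hΓ : ∀ s t : ℝ, 0 ≤ s → s ≤ t → Γ s t = E s t * κ s t)
    (T : ℝ) (hT : 0 < T)
    (hκpd : ∀ s t : ℝ, 0 ≤ s → s < t → (κ s t).IsSymm ∧ (κ s t).PosDef)
    (Sg : ℝ → ℝ → Matrix (Fin d) (Fin d) ℝ)
    (hSg : ∀ s t : ℝ, 0 ≤ s → s < t → t < T → Sg s t = Γ t T * (Γ s T)⁻¹ * Γ s t) :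
    ∀ s t : ℝ, 0 ≤ s → s < t → t < T →
      Sg s t
        = Γ t T * (∫ u in s..t, (Γ u T)⁻¹ * S u * (S u)ᵀ * ((Γ u T)ᵀ)⁻¹) * (Γ t T)ᵀ :=
  sigma_integral_representation_general S hS E hEcont hEid hEmul κ Γ hκ hΓ T hκpd Sg hSg
end

section
/- Let 0 ≤ s < t. If there exists t₀ ∈ (s,t) such that the matrix S(t₀) ∈ ℝ^{d×p} has full rank d, then the Kalman-type matrix κ(s,t) = ∫_s^t E(t,u)S(u)S(u)ᵀE(t,u)ᵀ du is positive definite. -/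
/-!
The integrand is the Gram matrix `C(u) C(u)ᵀ` of `C(u) = E(t,u) S(u)`, so it is positive
semidefinite for every `u`. At `t₀` the rows of `C(t₀)` are independent, because `E(t,t₀)` is
invertible and `S(t₀)` has rank `d`; hence `xᵀ C(t₀) C(t₀)ᵀ x > 0` for `x ≠ 0`, and the integral of
this continuous nonnegative function over `[s,t]` is positive.
-/

open MeasureTheory Matrix Topology Filter

attribute [local instance] Matrix.normedAddCommGroup Matrix.normedSpace

namespace Matrix

theorem vecMul_injective_of_rank_eq_card {m n K : Type*} [Fintype m] [Fintype n] [Field K]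
    {M : Matrix m n K} (h : M.rank = Fintype.card m) : Function.Injective M.vecMul := by
  rw [vecMul_injective_iff, linearIndependent_iff_card_eq_finrank_span, Set.finrank,
    ← rank_eq_finrank_span_row, h]

variable {n : Type*} [Fintype n] {a b : ℝ} {M : ℝ → Matrix n n ℝ}

theorem transpose_intervalIntegral (hM : ContinuousOn M (Set.uIcc a b)) :
    (∫ u in a..b, M u)ᵀ = ∫ u in a..b, (M u)ᵀ :=
  ((transposeLinearEquiv n n ℝ ℝ).toLinearMap.toContinuousLinearMap.intervalIntegral_comp_comm
    hM.intervalIntegrable).symm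

theorem dotProduct_intervalIntegral_mulVec (hM : ContinuousOn M (Set.uIcc a b))
    (x y : n → ℝ) : x ⬝ᵥ (∫ u in a..b, M u) *ᵥ y = ∫ u in a..b, x ⬝ᵥ M u *ᵥ y := by
  classical
  let L : Matrix n n ℝ →ₗ[ℝ] ℝ :=
    LinearMap.applyₗ y ∘ₗ LinearMap.applyₗ x ∘ₗ (toLinearMap₂' ℝ).toLinearMap
  set L' := LinearMap.toContinuousLinearMap L
  have hL : ∀ A, L' A = x ⬝ᵥ A *ᵥ y := fun A => by
    change L A = _
    simp [L, toLinearMap₂'_apply']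
  calc x ⬝ᵥ (∫ u in a..b, M u) *ᵥ y = L' (∫ u in a..b, M u) := (hL _).symm
    _ = ∫ u in a..b, L' (M u) := (L'.intervalIntegral_comp_comm hM.intervalIntegrable).symm
    _ = ∫ u in a..b, x ⬝ᵥ M u *ᵥ y := intervalIntegral.integral_congr fun u _ => hL (M u)

theorem posDef_intervalIntegral_of_posSemidef {t₀ : ℝ} (hab : a < b)
    (hM : ContinuousOn M (Set.Icc a b)) (hpsd : ∀ u ∈ Set.Icc a b, (M u).PosSemidef)
    (ht₀ : t₀ ∈ Set.Icc a b) (hpd : (M t₀).PosDef) : (∫ u in a..b, M u).PosDef := by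
  have hM' : ContinuousOn M (Set.uIcc a b) := by rwa [Set.uIcc_of_le hab.le]
  refine posDef_iff_dotProduct_mulVec.mpr ⟨?_, fun x hx => ?_⟩
  · rw [IsHermitian, conjTranspose_eq_transpose_of_trivial, transpose_intervalIntegral hM']
    refine intervalIntegral.integral_congr fun u hu => ?_
    rw [Set.uIcc_of_le hab.le] at hu
    simpa only [IsHermitian, conjTranspose_eq_transpose_of_trivial] using (hpsd u hu).isHermitian
  · rw [star_trivial, dotProduct_intervalIntegral_mulVec hM']
    refine intervalIntegral.integral_pos hab ?_ (fun u hu => ?_) ⟨t₀, ht₀, ?_⟩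
    · exact (continuous_const.dotProduct
        (continuous_id.matrix_mulVec continuous_const)).comp_continuousOn hM
    · simpa using (hpsd u (Set.Ioc_subset_Icc_self hu)).dotProduct_mulVec_nonneg x
    · simpa using hpd.dotProduct_mulVec_pos hx

end Matrix

theorem kalman_posDef_of_full_rank_general
    {d p : ℕ}
    (S : ℝ → Matrix (Fin d) (Fin p) ℝ)
    (hS : ContinuousOn S (Set.Ici 0))
    (E : ℝ → ℝ → Matrix (Fin d) (Fin d) ℝ)
    (hEcont : ContinuousOn (fun x : ℝ × ℝ => E x.1 x.2) (Set.Ici 0 ×ˢ Set.Ici 0))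
    (hEid : ∀ t : ℝ, 0 ≤ t → E t t = 1)
    (hEmul : ∀ r s t : ℝ, 0 ≤ r → 0 ≤ s → 0 ≤ t → E t s * E s r = E t r)
    (κ : ℝ → ℝ → Matrix (Fin d) (Fin d) ℝ)
    (hκ : ∀ s t : ℝ, 0 ≤ s → s ≤ t →
      κ s t = ∫ u in s..t, E t u * S u * (S u)ᵀ * (E t u)ᵀ)
    (s t : ℝ) (hs : 0 ≤ s) (hst : s < t)
    (hrank : ∃ t₀ ∈ Set.Ioo s t, (S t₀).rank = d) :
    (κ s t).PosDef := by
  obtain ⟨t₀, ht₀, hrk⟩ := hrank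
  have ht : 0 ≤ t := hs.trans hst.le
  have hIcc : Set.Icc s t ⊆ Set.Ici 0 := fun u hu => hs.trans hu.1
  have hC : ContinuousOn (fun u => E t u * S u) (Set.Icc s t) :=
    (continuous_fst.matrix_mul continuous_snd).comp_continuousOn
      ((hEcont.comp (Continuous.prodMk_right t).continuousOn fun u hu => ⟨ht, hIcc hu⟩).prodMk
        (hS.mono hIcc))
  have hE_isUnit : IsUnit (E t t₀) :=
    (isUnit_iff_isUnit_det _).mpr <| isUnit_det_of_left_inverse <| by
      rw [hEmul t₀ t t₀ (hs.trans ht₀.1.le) ht (hs.trans ht₀.1.le), hEid t₀ (hs.trans ht₀.1.le)]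
  have hinj : Function.Injective (E t t₀ * S t₀).vecMul := by
    simpa only [Function.comp_def, ← vecMul_vecMul] using
      (vecMul_injective_of_rank_eq_card (by simpa using hrk)).comp
        (vecMul_injective_iff_isUnit.mpr hE_isUnit)
  have hgram : ∀ u, E t u * S u * (S u)ᵀ * (E t u)ᵀ = E t u * S u * (E t u * S u)ᴴ := fun u => by
    simp only [conjTranspose_eq_transpose_of_trivial, transpose_mul, Matrix.mul_assoc]
  rw [hκ s t hs hst.le]
  simp_rw [hgram]
  exact posDef_intervalIntegral_of_posSemidef hst
    ((continuous_id.matrix_mul continuous_id.matrix_conjTranspose).comp_continuousOn hC)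
    (fun u _ => posSemidef_self_mul_conjTranspose _) (Set.Ioo_subset_Icc_self ht₀)
    (PosDef.mul_conjTranspose_self _ hinj)

/-- Proposition (PROPOSITION_kappa), part (a): if `S(t₀)` has full rank `d` for some
`t₀ ∈ (s,t)`, then the Kalman-type matrix `κ(s,t)` is positive definite. -/
theorem kalman_posDef_of_full_rank
    {d p : ℕ} (hd : 1 ≤ d) (hdp : d ≤ p)
    (Q : ℝ → Matrix (Fin d) (Fin d) ℝ) (S : ℝ → Matrix (Fin d) (Fin p) ℝ)
    (hQ : ContinuousOn Q (Set.Ici 0)) (hS : ContinuousOn S (Set.Ici 0))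
    (E : ℝ → ℝ → Matrix (Fin d) (Fin d) ℝ)
    (hEcont : ContinuousOn (fun x : ℝ × ℝ => E x.1 x.2) (Set.Ici 0 ×ˢ Set.Ici 0))
    (hEid : ∀ t : ℝ, 0 ≤ t → E t t = 1)
    (hEmul : ∀ r s t : ℝ, 0 ≤ r → 0 ≤ s → 0 ≤ t → E t s * E s r = E t r)
    (hEderiv : ∀ s : ℝ, 0 ≤ s → ∀ t : ℝ, 0 ≤ t →
      HasDerivAt (fun τ => E τ s) (Q t * E t s) t)
    (κ : ℝ → ℝ → Matrix (Fin d) (Fin d) ℝ)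
    (hκ : ∀ s t : ℝ, 0 ≤ s → s ≤ t →
      κ s t = ∫ u in s..t, E t u * S u * (S u)ᵀ * (E t u)ᵀ)
    (s t : ℝ) (hs : 0 ≤ s) (hst : s < t)
    (hrank : ∃ t₀ ∈ Set.Ioo s t, (S t₀).rank = d) :
    (κ s t).PosDef :=
  kalman_posDef_of_full_rank_general S hS E hEcont hEid hEmul κ hκ s t hs hst hrank
end

section
/- For every t ∈ (0,T), the matrix-valued function τ ↦ Γ(τ,T) is differentiable at t with derivative ∂₁Γ(t,T) = Q(t)Γ(t,T) − S(t)S(t)ᵀ E(T,t)ᵀ. -/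
open MeasureTheory Matrix Topology Filter

attribute [local instance] Matrix.normedAddCommGroup Matrix.normedSpace

/-! Near `t`, `Γ(τ,T) = E(τ,T) ∫_τ^T E(T,u) S(u) S(u)ᵀ E(T,u)ᵀ du`. The product rule together with
the fundamental theorem of calculus differentiates this, and `E(t,T) E(T,t) = I` collapses the
boundary term `E(t,T) E(T,t) S(t) S(t)ᵀ E(T,t)ᵀ` to `S(t) S(t)ᵀ E(T,t)ᵀ`. -/

section MatrixContinuity

variable {X : Type*} [TopologicalSpace X] {s : Set X} {l m n : Type*}
  {R : Type*} [TopologicalSpace R]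

theorem ContinuousOn.matrix_mul [Fintype m] [NonUnitalNonAssocSemiring R] [ContinuousAdd R]
    [ContinuousMul R] {A : X → Matrix l m R} {B : X → Matrix m n R}
    (hA : ContinuousOn A s) (hB : ContinuousOn B s) : ContinuousOn (fun x => A x * B x) s := by
  rw [continuousOn_iff_continuous_domRestrict] at *
  exact hA.matrix_mul hB

theorem ContinuousOn.matrix_transpose {A : X → Matrix m n R} (hA : ContinuousOn A s) :
    ContinuousOn (fun x => (A x)ᵀ) s :=
  continuous_id.matrix_transpose.comp_continuousOn hA

end MatrixContinuity

section MatrixDerivative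

variable {𝕜 : Type*} [NontriviallyNormedField 𝕜] [CompleteSpace 𝕜]
  {l m n : Type*} [Fintype l] [Fintype m] [Fintype n]

noncomputable def Matrix.mulCLM : Matrix l m 𝕜 →L[𝕜] Matrix m n 𝕜 →L[𝕜] Matrix l n 𝕜 :=
  LinearMap.toContinuousLinearMap (LinearMap.toContinuousLinearMap.toLinearMap ∘ₗ mulLinearMap 𝕜)

theorem HasDerivAt.matrix_mul {A : 𝕜 → Matrix l m 𝕜} {B : 𝕜 → Matrix m n 𝕜}
    {A' : Matrix l m 𝕜} {B' : Matrix m n 𝕜} {x : 𝕜}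
    (hA : HasDerivAt A A' x) (hB : HasDerivAt B B' x) :
    HasDerivAt (fun y => A y * B y) (A x * B' + A' * B x) x :=
  Matrix.mulCLM.hasDerivAt_of_bilinear (fun _ => hA) (fun _ => hB)

end MatrixDerivative

theorem ContinuousOn.hasDerivAt_intervalIntegral_left {E : Type*} [NormedAddCommGroup E]
    [NormedSpace ℝ E] [CompleteSpace E] {f : ℝ → E} {s : Set ℝ} {a b : ℝ}
    (hf : ContinuousOn f s) (hs : MeasurableSet s) (hsa : s ∈ 𝓝 a) (hab : Set.uIcc a b ⊆ s) :
    HasDerivAt (fun x => ∫ u in x..b, f u) (-f a) a := by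
  refine intervalIntegral.integral_hasDerivAt_left (hf.mono hab).intervalIntegrable ?_
    (hf.continuousAt hsa)
  simpa only [nhdsWithin_eq_nhds.2 hsa] using hf.stronglyMeasurableAtFilter_nhdsWithin hs a

theorem gamma_first_partial_derivative_general
    {d p : ℕ}
    (Q : ℝ → Matrix (Fin d) (Fin d) ℝ) (S : ℝ → Matrix (Fin d) (Fin p) ℝ)
    (hS : ContinuousOn S (Set.Ici 0))
    (E : ℝ → ℝ → Matrix (Fin d) (Fin d) ℝ)
    (hEcont : ContinuousOn (fun x : ℝ × ℝ => E x.1 x.2) (Set.Ici 0 ×ˢ Set.Ici 0))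
    (hEid : ∀ t : ℝ, 0 ≤ t → E t t = 1)
    (hEmul : ∀ r s t : ℝ, 0 ≤ r → 0 ≤ s → 0 ≤ t → E t s * E s r = E t r)
    (hEderiv : ∀ s : ℝ, 0 ≤ s → ∀ t : ℝ, 0 ≤ t →
      HasDerivAt (fun τ => E τ s) (Q t * E t s) t)
    (κ Γ : ℝ → ℝ → Matrix (Fin d) (Fin d) ℝ)
    (hκ : ∀ s t : ℝ, 0 ≤ s → s ≤ t →
      κ s t = ∫ u in s..t, E t u * S u * (S u)ᵀ * (E t u)ᵀ)
    (hΓ : ∀ s t : ℝ, 0 ≤ s → s ≤ t → Γ s t = E s t * κ s t)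
    (T : ℝ) :
    ∀ t : ℝ, 0 < t → t < T →
      HasDerivAt (fun τ => Γ τ T) (Q t * Γ t T - S t * (S t)ᵀ * (E T t)ᵀ) t := by
  intro t ht htT
  have hT : 0 ≤ T := ht.le.trans htT.le
  set f := fun u => E T u * S u * (S u)ᵀ * (E T u)ᵀ with hf_def
  have hET : ContinuousOn (E T) (Set.Ici 0) :=
    hEcont.comp (Continuous.prodMk_right T).continuousOn fun _ hu => ⟨hT, hu⟩
  have hf : ContinuousOn f (Set.Ici 0) :=
    ((hET.matrix_mul hS).matrix_mul hS.matrix_transpose).matrix_mul hET.matrix_transpose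
  have hκ_deriv : HasDerivAt (fun τ => ∫ u in τ..T, f u) (-f t) t :=
    hf.hasDerivAt_intervalIntegral_left measurableSet_Ici (Ici_mem_nhds ht)
      (by rw [Set.uIcc_of_le htT.le]; exact fun u hu => ht.le.trans hu.1)
  have hΓ_eq : (fun τ => Γ τ T) =ᶠ[𝓝 t] fun τ => E τ T * ∫ u in τ..T, f u := by
    filter_upwards [Ioo_mem_nhds ht htT] with τ hτ
    rw [hΓ τ T hτ.1.le hτ.2.le, hκ τ T hτ.1.le hτ.2.le]
  have hE_inv : E t T * E T t = 1 := by rw [hEmul t T t ht.le hT ht.le, hEid t ht.le]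
  refine (((hEderiv T hT t ht.le).matrix_mul hκ_deriv).congr_of_eventuallyEq hΓ_eq).congr_deriv ?_
  rw [hΓ t T ht.le htT.le, hκ t T ht.le htT.le, hf_def]
  simp only [Matrix.mul_neg, ← Matrix.mul_assoc, hE_inv, Matrix.one_mul]
  abel

/-- Identity (SEGED21): for `t ∈ (0,T)`, the map `τ ↦ Γ(τ,T)` is differentiable at `t`
with `∂₁Γ(t,T) = Q(t)Γ(t,T) − S(t)S(t)ᵀ E(T,t)ᵀ`. -/
theorem gamma_first_partial_derivative
    {d p : ℕ} (hd : 1 ≤ d)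
    (Q : ℝ → Matrix (Fin d) (Fin d) ℝ) (S : ℝ → Matrix (Fin d) (Fin p) ℝ)
    (hQ : ContinuousOn Q (Set.Ici 0)) (hS : ContinuousOn S (Set.Ici 0))
    (E : ℝ → ℝ → Matrix (Fin d) (Fin d) ℝ)
    (hEcont : ContinuousOn (fun x : ℝ × ℝ => E x.1 x.2) (Set.Ici 0 ×ˢ Set.Ici 0))
    (hEid : ∀ t : ℝ, 0 ≤ t → E t t = 1)
    (hEmul : ∀ r s t : ℝ, 0 ≤ r → 0 ≤ s → 0 ≤ t → E t s * E s r = E t r)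
    (hEderiv : ∀ s : ℝ, 0 ≤ s → ∀ t : ℝ, 0 ≤ t →
      HasDerivAt (fun τ => E τ s) (Q t * E t s) t)
    (κ Γ : ℝ → ℝ → Matrix (Fin d) (Fin d) ℝ)
    (hκ : ∀ s t : ℝ, 0 ≤ s → s ≤ t →
      κ s t = ∫ u in s..t, E t u * S u * (S u)ᵀ * (E t u)ᵀ)
    (hΓ : ∀ s t : ℝ, 0 ≤ s → s ≤ t → Γ s t = E s t * κ s t)
    (T : ℝ) (hT : 0 < T) :
    ∀ t : ℝ, 0 < t → t < T →
      HasDerivAt (fun τ => Γ τ T) (Q t * Γ t T - S t * (S t)ᵀ * (E T t)ᵀ) t :=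
  gamma_first_partial_derivative_general Q S hS E hEcont hEid hEmul hEderiv κ Γ hκ hΓ T
end

section
/- The matrix-valued function t ↦ Γ(t,T) Γ(0,T)⁻¹ Γ(0,t) (Γ(t,T)ᵀ)⁻¹, defined for t ∈ (0,T), converges to the identity matrix I_d as t ↑ T. -/
open MeasureTheory Matrix Topology Filter

attribute [local instance] Matrix.normedAddCommGroup Matrix.normedSpace

/-! Splitting the Kalman integral at `t` gives `κ(0,T) = E(T,t) κ(0,t) E(T,t)ᵀ + κ(t,T)`. Together
with `Γ = E κ` and `E(0,T)⁻¹ E(0,t) = E(T,t)` this collapses the product to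
`E(t,T) (I - κ(t,T) κ(0,T)⁻¹)`, which tends to `I` because `E(t,T) → I` and `κ(t,T) → 0`. -/

/-- The norm topology agrees with the product topology of `Matrix` only after unfolding the
non-reducible `Matrix.normedAddCommGroup`, so instance search does not find this structure, which
`IntervalIntegrable` needs. -/
private noncomputable instance {m n : Type*} [Fintype m] [Fintype n] :
    ENormedAddCommMonoid (Matrix m n ℝ) :=
  NormedAddCommGroup.toENormedAddCommMonoid

section MatrixAlgebra

variable {n K : Type*} [Fintype n] [DecidableEq n] [CommRing K]

theorem mul_mul_inv_mul_mul_transpose_inv_eq {A B C K₀ K₁ K₂ : Matrix n n K}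
    (hBA : B * A = 1) (hC : IsUnit C.det) (hK₀ : IsUnit K₀.det) (hK₂ : IsUnit K₂.det)
    (hK₂symm : K₂.IsSymm) (hsplit : K₀ = B * K₁ * Bᵀ + K₂) :
    A * K₂ * (C * K₀)⁻¹ * (C * B * K₁) * ((A * K₂)ᵀ)⁻¹ = A * (1 - K₂ * K₀⁻¹) := by
  have hAT : (Aᵀ)⁻¹ = Bᵀ := by
    rw [← transpose_nonsing_inv, inv_eq_left_inv hBA]
  have hmid : B * K₁ * Bᵀ = K₀ - K₂ := eq_sub_of_add_eq hsplit.symm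
  rw [transpose_mul, hK₂symm.eq, Matrix.mul_inv_rev, Matrix.mul_inv_rev, hAT]
  calc A * K₂ * (K₀⁻¹ * C⁻¹) * (C * B * K₁) * (Bᵀ * K₂⁻¹)
      = A * (K₂ * K₀⁻¹ * (C⁻¹ * C) * (B * K₁ * Bᵀ) * K₂⁻¹) := by simp only [Matrix.mul_assoc]
    _ = A * (1 - K₂ * K₀⁻¹) := by
      rw [nonsing_inv_mul _ hC, hmid, Matrix.mul_one, Matrix.mul_sub, Matrix.sub_mul,
        Matrix.mul_assoc K₂, nonsing_inv_mul _ hK₀, Matrix.mul_one, mul_nonsing_inv _ hK₂,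
        Matrix.mul_assoc (K₂ * K₀⁻¹), mul_nonsing_inv _ hK₂, Matrix.mul_one]

end MatrixAlgebra

theorem tendsto_intervalIntegral_nhdsLT {F : Type*} [NormedAddCommGroup F] [NormedSpace ℝ F]
    {f : ℝ → F} {a b : ℝ} (hab : a < b) (hf : IntegrableOn f (Set.Icc a b)) :
    Tendsto (fun t => ∫ u in t..b, f u) (𝓝[<] b) (𝓝 0) := by
  rw [← Set.uIcc_of_le hab.le] at hf
  have hle : 𝓝[<] b ≤ 𝓝[Set.uIcc a b] b := by
    rw [← nhdsWithin_Ioo_eq_nhdsLT hab, Set.uIcc_of_le hab.le]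
    exact nhdsWithin_mono _ Set.Ioo_subset_Icc_self
  simpa using ((intervalIntegral.continuousOn_primitive_interval_left hf) b
    Set.right_mem_uIcc).tendsto.mono_left hle

section Kalman

variable {d p : ℕ}

def kalmanIntegrand (E : ℝ → ℝ → Matrix (Fin d) (Fin d) ℝ) (S : ℝ → Matrix (Fin d) (Fin p) ℝ)
    (t u : ℝ) : Matrix (Fin d) (Fin d) ℝ :=
  E t u * S u * (S u)ᵀ * (E t u)ᵀ

noncomputable def kalman (E : ℝ → ℝ → Matrix (Fin d) (Fin d) ℝ)
    (S : ℝ → Matrix (Fin d) (Fin p) ℝ) (s t : ℝ) : Matrix (Fin d) (Fin d) ℝ :=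
  ∫ u in s..t, kalmanIntegrand E S t u

variable {E : ℝ → ℝ → Matrix (Fin d) (Fin d) ℝ} {S : ℝ → Matrix (Fin d) (Fin p) ℝ}

theorem continuousOn_kalmanIntegrand (hS : ContinuousOn S (Set.Ici 0))
    (hE : ContinuousOn (fun x : ℝ × ℝ => E x.1 x.2) (Set.Ici 0 ×ˢ Set.Ici 0))
    {t : ℝ} (ht : 0 ≤ t) : ContinuousOn (kalmanIntegrand E S t) (Set.Ici 0) := by
  have hEt : ContinuousOn (E t) (Set.Ici 0) :=
    hE.comp (Continuous.prodMk_right t).continuousOn fun u hu => ⟨ht, hu⟩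
  rw [continuousOn_iff_continuous_domRestrict] at hS hEt ⊢
  exact ((hEt.matrix_mul hS).matrix_mul hS.matrix_transpose).matrix_mul hEt.matrix_transpose

theorem intervalIntegrable_kalmanIntegrand (hS : ContinuousOn S (Set.Ici 0))
    (hE : ContinuousOn (fun x : ℝ × ℝ => E x.1 x.2) (Set.Ici 0 ×ˢ Set.Ici 0))
    {t a b : ℝ} (ht : 0 ≤ t) (ha : 0 ≤ a) (hb : 0 ≤ b) :
    IntervalIntegrable (kalmanIntegrand E S t) volume a b :=
  ((continuousOn_kalmanIntegrand hS hE ht).mono fun _ hu =>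
    le_trans (le_min ha hb) hu.1).intervalIntegrable

theorem kalmanIntegrand_eq_conj
    (hEmul : ∀ r s t : ℝ, 0 ≤ r → 0 ≤ s → 0 ≤ t → E t s * E s r = E t r)
    {u t T : ℝ} (hu : 0 ≤ u) (ht : 0 ≤ t) (hT : 0 ≤ T) :
    kalmanIntegrand E S T u = E T t * kalmanIntegrand E S t u * (E T t)ᵀ := by
  simp only [kalmanIntegrand, ← hEmul u t T hu ht hT, transpose_mul, Matrix.mul_assoc]

theorem kalman_eq_conj_add (hS : ContinuousOn S (Set.Ici 0))
    (hE : ContinuousOn (fun x : ℝ × ℝ => E x.1 x.2) (Set.Ici 0 ×ˢ Set.Ici 0))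
    (hEmul : ∀ r s t : ℝ, 0 ≤ r → 0 ≤ s → 0 ≤ t → E t s * E s r = E t r)
    {r t T : ℝ} (hr : 0 ≤ r) (hrt : r ≤ t) (htT : t ≤ T) :
    kalman E S r T = E T t * kalman E S r t * (E T t)ᵀ + kalman E S t T := by
  have ht : 0 ≤ t := hr.trans hrt
  have hT : 0 ≤ T := ht.trans htT
  let conj : Matrix (Fin d) (Fin d) ℝ →L[ℝ] Matrix (Fin d) (Fin d) ℝ :=
    LinearMap.toContinuousLinearMap (LinearMap.mulLeftRight ℝ (E T t, (E T t)ᵀ))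
  have hfirst : ∫ u in r..t, kalmanIntegrand E S T u = E T t * kalman E S r t * (E T t)ᵀ := by
    calc ∫ u in r..t, kalmanIntegrand E S T u
        = ∫ u in r..t, conj (kalmanIntegrand E S t u) := by
          refine intervalIntegral.integral_congr fun u hu => ?_
          rw [Set.uIcc_of_le hrt] at hu
          exact kalmanIntegrand_eq_conj hEmul (hr.trans hu.1) ht hT
      _ = conj (kalman E S r t) :=
          conj.intervalIntegral_comp_comm (intervalIntegrable_kalmanIntegrand hS hE ht hr ht)
  rw [← hfirst, kalman, kalman, intervalIntegral.integral_add_adjacent_intervals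
    (intervalIntegrable_kalmanIntegrand hS hE hT hr ht)
    (intervalIntegrable_kalmanIntegrand hS hE hT ht hT)]

theorem tendsto_evolution_nhdsLT
    (hE : ContinuousOn (fun x : ℝ × ℝ => E x.1 x.2) (Set.Ici 0 ×ˢ Set.Ici 0))
    (hEid : ∀ t : ℝ, 0 ≤ t → E t t = 1) {T : ℝ} (hT : 0 < T) :
    Tendsto (fun t => E t T) (𝓝[<] T) (𝓝 1) := by
  have hpair : Tendsto (fun t => (t, T)) (𝓝[<] T) (𝓝[Set.Ici 0 ×ˢ Set.Ici 0] (T, T)) :=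
    tendsto_nhdsWithin_iff.2
      ⟨((continuous_id.prodMk continuous_const).tendsto T).mono_left nhdsWithin_le_nhds,
        eventually_of_mem (Ioo_mem_nhdsLT hT) fun t ht => ⟨ht.1.le, hT.le⟩⟩
  have hlim := (hE (T, T) ⟨hT.le, hT.le⟩).tendsto.comp hpair
  rwa [hEid T hT.le] at hlim

theorem tendsto_kalman_nhdsLT_zero (hS : ContinuousOn S (Set.Ici 0))
    (hE : ContinuousOn (fun x : ℝ × ℝ => E x.1 x.2) (Set.Ici 0 ×ˢ Set.Ici 0))
    {T : ℝ} (hT : 0 < T) : Tendsto (fun t => kalman E S t T) (𝓝[<] T) (𝓝 0) :=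
  tendsto_intervalIntegral_nhdsLT hT <|
    ((continuousOn_kalmanIntegrand hS hE hT.le).mono Set.Icc_subset_Ici_self).integrableOn_compact
      isCompact_Icc

end Kalman

theorem gamma_product_tendsto_one_general
    {d p : ℕ}
    (S : ℝ → Matrix (Fin d) (Fin p) ℝ)
    (hS : ContinuousOn S (Set.Ici 0))
    (E : ℝ → ℝ → Matrix (Fin d) (Fin d) ℝ)
    (hEcont : ContinuousOn (fun x : ℝ × ℝ => E x.1 x.2) (Set.Ici 0 ×ˢ Set.Ici 0))
    (hEid : ∀ t : ℝ, 0 ≤ t → E t t = 1)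
    (hEmul : ∀ r s t : ℝ, 0 ≤ r → 0 ≤ s → 0 ≤ t → E t s * E s r = E t r)
    (κ Γ : ℝ → ℝ → Matrix (Fin d) (Fin d) ℝ)
    (hκ : ∀ s t : ℝ, 0 ≤ s → s ≤ t →
      κ s t = ∫ u in s..t, E t u * S u * (S u)ᵀ * (E t u)ᵀ)
    (hΓ : ∀ s t : ℝ, 0 ≤ s → s ≤ t → Γ s t = E s t * κ s t)
    (T : ℝ) (hT : 0 < T)
    (hκpd : ∀ s t : ℝ, 0 ≤ s → s < t → (κ s t).IsSymm ∧ (κ s t).PosDef) :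
    Tendsto (fun t : ℝ => Γ t T * (Γ 0 T)⁻¹ * Γ 0 t * ((Γ t T)ᵀ)⁻¹)
      (𝓝[<] T) (𝓝 (1 : Matrix (Fin d) (Fin d) ℝ)) := by
  have hκunit : ∀ s t, 0 ≤ s → s < t → IsUnit (κ s t).det := fun s t hs hst =>
    (isUnit_iff_isUnit_det _).1 (hκpd s t hs hst).2.isUnit
  have hproduct : ∀ t ∈ Set.Ioo 0 T,
      Γ t T * (Γ 0 T)⁻¹ * Γ 0 t * ((Γ t T)ᵀ)⁻¹ = E t T * (1 - κ t T * (κ 0 T)⁻¹) := by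
    rintro t ⟨ht, htT⟩
    have hsplit : κ 0 T = E T t * κ 0 t * (E T t)ᵀ + κ t T := by
      rw [hκ 0 T le_rfl hT.le, hκ 0 t le_rfl ht.le, hκ t T ht.le htT.le]
      exact kalman_eq_conj_add hS hEcont hEmul le_rfl ht.le htT.le
    rw [hΓ t T ht.le htT.le, hΓ 0 T le_rfl hT.le, hΓ 0 t le_rfl ht.le,
      ← hEmul t T 0 ht.le hT.le le_rfl]
    exact mul_mul_inv_mul_mul_transpose_inv_eq (hEmul T t T hT.le ht.le hT.le ▸ hEid T hT.le)
      (isUnit_det_of_right_inverse (hEmul 0 T 0 le_rfl hT.le le_rfl ▸ hEid 0 le_rfl))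
      (hκunit 0 T le_rfl hT) (hκunit t T ht.le htT) (hκpd t T ht.le htT).1 hsplit
  have hκlim : Tendsto (fun t => κ t T) (𝓝[<] T) (𝓝 0) :=
    (tendsto_kalman_nhdsLT_zero hS hEcont hT).congr' <| eventuallyEq_of_mem
      (Ioo_mem_nhdsLT hT) fun t ht => (hκ t T ht.1.le ht.2.le).symm
  have hlim : Tendsto (fun t => E t T * (1 - κ t T * (κ 0 T)⁻¹)) (𝓝[<] T)
      (𝓝 (1 * (1 - 0 * (κ 0 T)⁻¹))) :=
    (tendsto_evolution_nhdsLT hEcont hEid hT).mul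
      (tendsto_const_nhds.sub (hκlim.mul_const (κ 0 T)⁻¹))
  rw [zero_mul, sub_zero, mul_one] at hlim
  exact hlim.congr' (eventuallyEq_of_mem (Ioo_mem_nhdsLT hT) hproduct).symm

/-- `Γ(t,T) Γ(0,T)⁻¹ Γ(0,t) (Γ(t,T)ᵀ)⁻¹ → I_d` as `t ↑ T`. -/
theorem gamma_product_tendsto_one
    {d p : ℕ} (hd : 1 ≤ d)
    (Q : ℝ → Matrix (Fin d) (Fin d) ℝ) (S : ℝ → Matrix (Fin d) (Fin p) ℝ)
    (hQ : ContinuousOn Q (Set.Ici 0)) (hS : ContinuousOn S (Set.Ici 0))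
    (E : ℝ → ℝ → Matrix (Fin d) (Fin d) ℝ)
    (hEcont : ContinuousOn (fun x : ℝ × ℝ => E x.1 x.2) (Set.Ici 0 ×ˢ Set.Ici 0))
    (hEid : ∀ t : ℝ, 0 ≤ t → E t t = 1)
    (hEmul : ∀ r s t : ℝ, 0 ≤ r → 0 ≤ s → 0 ≤ t → E t s * E s r = E t r)
    (hEderiv : ∀ s : ℝ, 0 ≤ s → ∀ t : ℝ, 0 ≤ t →
      HasDerivAt (fun τ => E τ s) (Q t * E t s) t)
    (κ Γ : ℝ → ℝ → Matrix (Fin d) (Fin d) ℝ)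
    (hκ : ∀ s t : ℝ, 0 ≤ s → s ≤ t →
      κ s t = ∫ u in s..t, E t u * S u * (S u)ᵀ * (E t u)ᵀ)
    (hΓ : ∀ s t : ℝ, 0 ≤ s → s ≤ t → Γ s t = E s t * κ s t)
    (T : ℝ) (hT : 0 < T)
    (hκpd : ∀ s t : ℝ, 0 ≤ s → s < t → (κ s t).IsSymm ∧ (κ s t).PosDef) :
    Tendsto (fun t : ℝ => Γ t T * (Γ 0 T)⁻¹ * Γ 0 t * ((Γ t T)ᵀ)⁻¹)
      (𝓝[<] T) (𝓝 (1 : Matrix (Fin d) (Fin d) ℝ)) :=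
  gamma_product_tendsto_one_general S hS E hEcont hEid hEmul κ Γ hκ hΓ T hT hκpd
end

section
/- Fix b ∈ ℝ. For all 0 ≤ s < t < T and all x, y ∈ ℝ one has p_{s,t}(x,y) · p_{t,T}(y,b) / p_{s,T}(x,b) = (2π σ(s,t))^{−1/2} exp( −(y − n_{x,b}(s,t))² / (2σ(s,t)) ); that is, as a function of y the left-hand side is the Gaussian density with mean n_{x,b}(s,t) and variance σ(s,t). -/
/-!
The coefficients of the linear SDE satisfy the flow identities
`γ(s,T) = γ(t,T) + e² γ(s,t)` and `m_x(s,T) = e m_x(s,t) + c`, with `e = exp (q̄ T - q̄ t)` and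
`c = ∫_t^T exp (q̄ T - q̄ u) r u du` (split the integrals at `t`). Hence the ratio is Bayes' formula
for `X ~ N(m_x(s,t), γ(s,t))` and `Y | X ~ N(e X + c, γ(t,T))`: then `Y ~ N(e m_x(s,t) + c, γ(s,T))`,
and completing the square shows that `X | Y = b` is Gaussian with mean `n_{x,b}(s,t)` and variance
`γ(s,t) γ(t,T) / γ(s,T) = σ(s,t)`.
-/

open MeasureTheory Topology Filter

open Real Set ProbabilityTheory

lemma gaussianPDFReal_toNNReal {v : ℝ} (hv : 0 ≤ v) (μ x : ℝ) :
    gaussianPDFReal μ v.toNNReal x = (√(2 * π * v))⁻¹ * exp (-(x - μ) ^ 2 / (2 * v)) := by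
  simp [gaussianPDFReal, hv]

lemma gaussian_exponent_conditioning {A B : ℝ} (hA : 0 < A) (hB : 0 < B) (a c e x y : ℝ) :
    -(x - a) ^ 2 / (2 * A) + -(y - (e * x + c)) ^ 2 / (2 * B)
        - -(y - (e * a + c)) ^ 2 / (2 * (B + e ^ 2 * A))
      = -(x - (A / (B + e ^ 2 * A) * e * (y - c) + B / (B + e ^ 2 * A) * a)) ^ 2
          / (2 * (A * B / (B + e ^ 2 * A))) := by
  have : 0 < B + e ^ 2 * A := by positivity
  field_simp
  ring

lemma sqrt_two_pi_mul_div {A B C : ℝ} (hA : 0 ≤ A) (hB : 0 ≤ B) :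
    √(2 * π * (A * B / C)) = √(2 * π * A) * √(2 * π * B) / √(2 * π * C) := by
  rw [← sqrt_mul (by positivity), ← sqrt_div (by positivity)]
  congr 1
  field_simp

theorem gaussianPDFReal_mul_div_gaussianPDFReal {A B : ℝ} (hA : 0 < A) (hB : 0 < B)
    (a c e x y : ℝ) :
    gaussianPDFReal a A.toNNReal x * gaussianPDFReal (e * x + c) B.toNNReal y
        / gaussianPDFReal (e * a + c) (B + e ^ 2 * A).toNNReal y
      = gaussianPDFReal (A / (B + e ^ 2 * A) * e * (y - c) + B / (B + e ^ 2 * A) * a)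
          (A * B / (B + e ^ 2 * A)).toNNReal x := by
  have hC : 0 < B + e ^ 2 * A := by positivity
  simp only [gaussianPDFReal_toNNReal, hA.le, hB.le, hC.le, (div_pos (mul_pos hA hB) hC).le]
  rw [sqrt_two_pi_mul_div hA.le hB.le, ← gaussian_exponent_conditioning hA hB, exp_sub, exp_add]
  have hπ := pi_pos
  field_simp

lemma continuousOn_primitive_Icc {q : ℝ → ℝ} {a b : ℝ} (hq : ContinuousOn q (Icc a b))
    (hab : a ≤ b) :
    ContinuousOn (fun t ↦ ∫ u in a..t, q u) (Icc a b) := by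
  rw [← uIcc_of_le hab] at hq ⊢
  exact intervalIntegral.continuousOn_primitive_interval (hq.integrableOn_compact isCompact_uIcc)

section Flow

variable {Q f : ℝ → ℝ} {s t T : ℝ}

lemma intervalIntegrable_exp_sub_mul (hQ : ContinuousOn Q (Icc s t))
    (hf : ContinuousOn f (Icc s t)) (hst : s ≤ t) (c : ℝ) :
    IntervalIntegrable (fun u ↦ exp (c - Q u) * f u) volume s t := by
  refine ContinuousOn.intervalIntegrable ?_
  rw [uIcc_of_le hst]
  exact (continuousOn_const.sub hQ).rexp.mul hf

lemma integral_exp_sub_mul_eq_add_adjacent (hQ : ContinuousOn Q (Icc s T))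
    (hf : ContinuousOn f (Icc s T)) (hst : s ≤ t) (htT : t ≤ T) :
    ∫ u in s..T, exp (Q T - Q u) * f u
      = exp (Q T - Q t) * (∫ u in s..t, exp (Q t - Q u) * f u)
        + ∫ u in t..T, exp (Q T - Q u) * f u := by
  have hst' : Icc s t ⊆ Icc s T := Icc_subset_Icc_right htT
  have htT' : Icc t T ⊆ Icc s T := Icc_subset_Icc_left hst
  rw [← intervalIntegral.integral_add_adjacent_intervals
      (intervalIntegrable_exp_sub_mul (hQ.mono hst') (hf.mono hst') hst _)
      (intervalIntegrable_exp_sub_mul (hQ.mono htT') (hf.mono htT') htT _),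
    ← intervalIntegral.integral_const_mul]
  congr 1
  refine intervalIntegral.integral_congr fun u _ ↦ ?_
  simp only [← mul_assoc, ← exp_add, sub_add_sub_cancel]

end Flow

namespace LinearSDE

variable {Q σ r : ℝ → ℝ} {s t T : ℝ}

/-- `mean Q r x s t` and `variance Q σ s t` are the mean and variance of `X_t` given `X_s = x`
for the linear SDE `dX = (q X + r) dt + σ dW`, where `Q` is a primitive of `q`. -/
noncomputable def mean (Q r : ℝ → ℝ) (x s t : ℝ) : ℝ :=
  exp (Q t - Q s) * x + ∫ u in s..t, exp (Q t - Q u) * r u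

noncomputable def variance (Q σ : ℝ → ℝ) (s t : ℝ) : ℝ :=
  ∫ u in s..t, exp (2 * (Q t - Q u)) * σ u ^ 2

lemma mean_trans (hQ : ContinuousOn Q (Icc s T)) (hr : ContinuousOn r (Icc s T)) (hst : s ≤ t)
    (htT : t ≤ T) (x : ℝ) :
    mean Q r x s T = mean Q r (mean Q r x s t) t T := by
  have hE : exp (Q T - Q s) = exp (Q T - Q t) * exp (Q t - Q s) := by
    rw [← exp_add, sub_add_sub_cancel]
  rw [mean, mean, mean, integral_exp_sub_mul_eq_add_adjacent hQ hr hst htT, hE]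
  ring

lemma variance_trans (hQ : ContinuousOn Q (Icc s T)) (hσ : ContinuousOn σ (Icc s T))
    (hst : s ≤ t) (htT : t ≤ T) :
    variance Q σ s T = variance Q σ t T + exp (Q T - Q t) ^ 2 * variance Q σ s t := by
  have h := integral_exp_sub_mul_eq_add_adjacent (Q := fun u ↦ 2 * Q u) (f := fun u ↦ σ u ^ 2)
    (continuousOn_const.mul hQ) (hσ.pow 2) hst htT
  simp only [← mul_sub] at h
  have hE2 : exp (2 * (Q T - Q t)) = exp (Q T - Q t) ^ 2 := by rw [← exp_nat_mul]; norm_num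
  rw [variance, variance, variance, h, hE2, add_comm]

lemma variance_pos (hQ : ContinuousOn Q (Icc s t)) (hσ : ContinuousOn σ (Icc s t))
    (hσ0 : ∀ u ∈ Ioo s t, σ u ≠ 0) (hst : s < t) : 0 < variance Q σ s t := by
  refine intervalIntegral.intervalIntegral_pos_of_pos_on ?_
    (fun u hu ↦ by have := hσ0 u hu; positivity) hst
  refine ContinuousOn.intervalIntegrable ?_
  rw [uIcc_of_le hst.le]
  exact (continuousOn_const.mul (continuousOn_const.sub hQ)).rexp.mul (hσ.pow 2)

end LinearSDE

open LinearSDE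

theorem one_dim_bridge_transition_density_general
    (q σ : ℝ → ℝ)
    (hq : ContinuousOn q (Set.Ici 0)) (hσ : ContinuousOn σ (Set.Ici 0))
    (hσne : ∀ t : ℝ, 0 ≤ t → σ t ≠ 0)
    (qbar : ℝ → ℝ) (hqbar : ∀ t : ℝ, qbar t = ∫ u in (0:ℝ)..t, q u)
    (γ : ℝ → ℝ → ℝ)
    (hγ : ∀ s t : ℝ, 0 ≤ s → s ≤ t →
      γ s t = ∫ u in s..t, Real.exp (2 * (qbar t - qbar u)) * (σ u) ^ 2)
    (r : ℝ → ℝ) (hr : ContinuousOn r (Set.Ici 0))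
    (m : ℝ → ℝ → ℝ → ℝ)
    (hm : ∀ (x : ℝ) (s t : ℝ), 0 ≤ s → s ≤ t →
      m x s t = Real.exp (qbar t - qbar s) * x
        + ∫ u in s..t, Real.exp (qbar t - qbar u) * r u)
    (p : ℝ → ℝ → ℝ → ℝ → ℝ)
    (hp : ∀ (s t x y : ℝ), 0 ≤ s → s < t →
      p s t x y = (Real.sqrt (2 * Real.pi * γ s t))⁻¹ *
        Real.exp (-(y - m x s t) ^ 2 / (2 * γ s t)))
    (T : ℝ)
    (σv : ℝ → ℝ → ℝ)
    (hσv : ∀ s t : ℝ, 0 ≤ s → s ≤ t → t < T → σv s t = γ s t * γ t T / γ s T)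
    (n : ℝ → ℝ → ℝ → ℝ → ℝ)
    (hn : ∀ (a b s t : ℝ), 0 ≤ s → s ≤ t → t < T →
      n a b s t = (γ s t / γ s T) * Real.exp (qbar T - qbar t) *
          (b - ∫ u in t..T, Real.exp (qbar T - qbar u) * r u)
        + (γ t T / γ s T) * m a s t)
    (b : ℝ) :
    ∀ (s t x y : ℝ), 0 ≤ s → s < t → t < T →
      p s t x y * p t T y b / p s T x b
        = (Real.sqrt (2 * Real.pi * σv s t))⁻¹ *
            Real.exp (-(y - n x b s t) ^ 2 / (2 * σv s t)) := by
  intro s t x y hs hst htT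
  have hsT : Icc s T ⊆ Ici 0 := Icc_subset_Ici_self.trans (Ici_subset_Ici.mpr hs)
  have hQ : ContinuousOn qbar (Icc s T) := by
    refine ContinuousOn.mono ?_ (Icc_subset_Icc_left hs)
    rw [funext hqbar]
    exact continuousOn_primitive_Icc (hq.mono Icc_subset_Ici_self) (hs.trans (hst.trans htT).le)
  have hγ_pos : ∀ a d, s ≤ a → a < d → d ≤ T → 0 < γ a d := fun a d ha had hd ↦ by
    have hsub : Icc a d ⊆ Icc s T := Icc_subset_Icc ha hd
    rw [hγ a d (hs.trans ha) had.le]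
    exact variance_pos (hQ.mono hsub) ((hσ.mono hsT).mono hsub)
      (fun u hu ↦ hσne u (hs.trans (ha.trans hu.1.le))) had
  have hγ_split : γ s T = γ t T + exp (qbar T - qbar t) ^ 2 * γ s t := by
    rw [hγ s T hs (hst.trans htT).le, hγ t T (hs.trans hst.le) htT.le, hγ s t hs hst.le]
    exact variance_trans hQ (hσ.mono hsT) hst.le htT.le
  have hm_split : m x s T = exp (qbar T - qbar t) * m x s t
      + ∫ u in t..T, exp (qbar T - qbar u) * r u := by
    rw [hm x s T hs (hst.trans htT).le, hm x s t hs hst.le]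
    exact mean_trans hQ (hr.mono hsT) hst.le htT.le x
  have hp_gauss : ∀ a d z w, s ≤ a → a < d → d ≤ T →
      p a d z w = gaussianPDFReal (m z a d) (γ a d).toNNReal w := fun a d z w ha had hd ↦ by
    rw [hp a d z w (hs.trans ha) had, gaussianPDFReal_toNNReal (hγ_pos a d ha had hd).le]
  have hA := hγ_pos s t le_rfl hst htT.le
  have hB := hγ_pos t T hst.le htT le_rfl
  rw [hp_gauss s t x y le_rfl hst htT.le, hp_gauss t T y b hst.le htT le_rfl,
    hp_gauss s T x b le_rfl (hst.trans htT) le_rfl, hm y t T (hs.trans hst.le) htT.le, hm_split,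
    hσv s t hs hst.le htT, hn x b s t hs hst.le htT, hγ_split,
    gaussianPDFReal_mul_div_gaussianPDFReal hA hB, gaussianPDFReal_toNNReal (by positivity)]

/-- One-dimensional version of Lemma 1: for fixed `b ∈ ℝ`, `0 ≤ s < t < T` and `x, y ∈ ℝ`,
the ratio `p_{s,t}(x,y) p_{t,T}(y,b) / p_{s,T}(x,b)` equals the Gaussian density with
mean `n_{x,b}(s,t)` and variance `σ(s,t)`. -/
theorem one_dim_bridge_transition_density
    (q σ : ℝ → ℝ)
    (hq : ContinuousOn q (Set.Ici 0)) (hσ : ContinuousOn σ (Set.Ici 0))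
    (hσne : ∀ t : ℝ, 0 ≤ t → σ t ≠ 0)
    (qbar : ℝ → ℝ) (hqbar : ∀ t : ℝ, qbar t = ∫ u in (0:ℝ)..t, q u)
    (γ : ℝ → ℝ → ℝ)
    (hγ : ∀ s t : ℝ, 0 ≤ s → s ≤ t →
      γ s t = ∫ u in s..t, Real.exp (2 * (qbar t - qbar u)) * (σ u) ^ 2)
    (r : ℝ → ℝ) (hr : ContinuousOn r (Set.Ici 0))
    (m : ℝ → ℝ → ℝ → ℝ)
    (hm : ∀ (x : ℝ) (s t : ℝ), 0 ≤ s → s ≤ t →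
      m x s t = Real.exp (qbar t - qbar s) * x
        + ∫ u in s..t, Real.exp (qbar t - qbar u) * r u)
    (p : ℝ → ℝ → ℝ → ℝ → ℝ)
    (hp : ∀ (s t x y : ℝ), 0 ≤ s → s < t →
      p s t x y = (Real.sqrt (2 * Real.pi * γ s t))⁻¹ *
        Real.exp (-(y - m x s t) ^ 2 / (2 * γ s t)))
    (T : ℝ) (hT : 0 < T)
    (σv : ℝ → ℝ → ℝ)
    (hσv : ∀ s t : ℝ, 0 ≤ s → s ≤ t → t < T → σv s t = γ s t * γ t T / γ s T)
    (n : ℝ → ℝ → ℝ → ℝ → ℝ)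
    (hn : ∀ (a b s t : ℝ), 0 ≤ s → s ≤ t → t < T →
      n a b s t = (γ s t / γ s T) * Real.exp (qbar T - qbar t) *
          (b - ∫ u in t..T, Real.exp (qbar T - qbar u) * r u)
        + (γ t T / γ s T) * m a s t)
    (b : ℝ) :
    ∀ (s t x y : ℝ), 0 ≤ s → s < t → t < T →
      p s t x y * p t T y b / p s T x b
        = (Real.sqrt (2 * Real.pi * σv s t))⁻¹ *
            Real.exp (-(y - n x b s t) ^ 2 / (2 * σv s t)) :=
  one_dim_bridge_transition_density_general q σ hq hσ hσne qbar hqbar γ hγ r hr m hm p hp T σv hσv n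
    hn b
end
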